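/- arXiv:1907.12519 — 2 statements merged into one kernel-verified Lean document; each statement's English description precedes it below -/
import Mathlib

section
/- Let S, A, C, c, R > 0 and n ≥ 3 a natural number. Suppose h₀ > 0 satisfies h₀ ≤ c·R/(2C) and B·h₀^(n−2) ≤ A/2 where B = C^n·(n−1)^(n−1)/(n^n·c^(n−1)). Then for all h with 0 ≤ h ≤ h₀ and all t with 0 ≤ t ≤ R: 2S − A·h² + C·h·t^(n−1) − c·t^n ≤ 2S − (A/2)·h², and moreover at t = R: 2S − A·h² + C·h·R^(n−1) − c·R^n ≤ 2S − (c/2)·R^n. -/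
/-! Young's inequality with exponents `n` and `n/(n-1)` splits the cross term `C h t^(n-1)` into
`B h^n + c t^n`, with `B` the constant of the hypothesis; for `n ≥ 3` and `h ≤ h₀` the term `B h^n`
is at most `(A/2) h^2`. At `t = R` the bound `h ≤ cR/(2C)` gives `C h R^(n-1) ≤ (c/2) R^n` directly. -/

lemma natCast_mul_mul_pow_pred_le {x y : ℝ} (hx : 0 ≤ x) (hy : 0 ≤ y) {n : ℕ} (hn : 1 ≤ n) :
    n * (x * y ^ (n - 1)) ≤ x ^ n + (n - 1) * y ^ n := by
  obtain ⟨m, rfl⟩ : ∃ m, n = m + 1 := ⟨n - 1, by omega⟩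
  simp only [Nat.add_sub_cancel, Nat.cast_add, Nat.cast_one, add_sub_cancel_right]
  rcases hy.eq_or_lt with rfl | hy
  · rcases m with _ | m <;> simp [pow_nonneg hx]
  have bernoulli := one_add_mul_le_pow (a := x / y - 1) (by linarith [div_nonneg hx hy.le]) (m + 1)
  rw [add_sub_cancel, div_pow] at bernoulli
  rw [le_div_iff₀ (pow_pos hy _)] at bernoulli
  have hxy : x / y * y ^ (m + 1) = x * y ^ m := by
    rw [pow_succ]; field_simp
  push_cast at bernoulli
  linear_combination bernoulli - (m + 1) * hxy

lemma mul_mul_pow_pred_le_add {C c h t : ℝ} (hC : 0 ≤ C) (hc : 0 < c) (hh : 0 ≤ h) (ht : 0 ≤ t)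
    {n : ℕ} (hn : 2 ≤ n) :
    C * h * t ^ (n - 1) ≤
      C ^ n * ((n : ℝ) - 1) ^ (n - 1) / ((n : ℝ) ^ n * c ^ (n - 1)) * h ^ n + c * t ^ n := by
  obtain ⟨m, rfl⟩ : ∃ m, n = m + 1 := ⟨n - 1, by omega⟩
  have hm : (0 : ℝ) < m := by norm_cast; omega
  have young := natCast_mul_mul_pow_pred_le (x := m * C * h / ((m + 1) * c)) (by positivity) ht
    (n := m + 1) (by omega)
  simp only [Nat.add_sub_cancel, Nat.cast_add, Nat.cast_one, add_sub_cancel_right] at young ⊢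
  have scaled := mul_le_mul_of_nonneg_left young (div_nonneg hc.le hm.le)
  refine le_of_eq_of_le ?_ (le_of_le_of_eq scaled ?_)
  · field_simp
  · rw [div_pow, mul_pow, mul_pow, mul_pow, pow_succ c m, pow_succ (m : ℝ) m]
    field_simp

lemma mul_pow_le_mul_sq {B K h h₀ : ℝ} (hB : 0 ≤ B) (hh : 0 ≤ h) (hh₀ : h ≤ h₀) {n : ℕ}
    (hn : 2 ≤ n) (hK : B * h₀ ^ (n - 2) ≤ K) : B * h ^ n ≤ K * h ^ 2 := by
  have hBh : B * h ^ (n - 2) ≤ K := (mul_le_mul_of_nonneg_left (by gcongr) hB).trans hK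
  calc B * h ^ n = B * h ^ (n - 2) * h ^ 2 := by rw [mul_assoc, ← pow_add, Nat.sub_add_cancel hn]
    _ ≤ K * h ^ 2 := by gcongr

lemma mul_pow_pred_le_mul_pow {a b R : ℝ} (hR : 0 ≤ R) (hab : a ≤ b * R) {n : ℕ} (hn : 1 ≤ n) :
    a * R ^ (n - 1) ≤ b * R ^ n :=
  calc a * R ^ (n - 1) ≤ b * R * R ^ (n - 1) := by gcongr
    _ = b * R ^ n := by rw [mul_assoc, ← pow_succ', Nat.sub_add_cancel hn]

theorem stmt_4_general (n : ℕ) (hn : 3 ≤ n) (S A C c R h₀ : ℝ)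
    (hA : 0 < A) (hC : 0 < C) (hc : 0 < c) (hR : 0 < R)
    (h₀le : h₀ ≤ c * R / (2 * C))
    (hB : (C ^ n * ((n : ℝ) - 1) ^ (n - 1) / ((n : ℝ) ^ n * c ^ (n - 1))) * h₀ ^ (n - 2) ≤ A / 2) :
    ∀ h : ℝ, 0 ≤ h → h ≤ h₀ →
      (∀ t : ℝ, 0 ≤ t → t ≤ R →
        2 * S - A * h ^ 2 + C * h * t ^ (n - 1) - c * t ^ n ≤ 2 * S - (A / 2) * h ^ 2) ∧
      2 * S - A * h ^ 2 + C * h * R ^ (n - 1) - c * R ^ n ≤ 2 * S - (c / 2) * R ^ n := by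
  intro h hh hhh₀
  have hn₁ : (0 : ℝ) ≤ n - 1 := by
    rw [sub_nonneg]; exact_mod_cast (by omega : 1 ≤ n)
  have small_h := mul_pow_le_mul_sq (by positivity) hh hhh₀ (by omega) hB
  refine ⟨fun t ht _ ↦ ?_, ?_⟩
  · linarith [mul_mul_pow_pred_le_add hC.le hc hh ht (by omega : 2 ≤ n)]
  · have hCh : C * h ≤ c / 2 * R :=
      calc C * h ≤ C * (c * R / (2 * C)) := by gcongr; exact hhh₀.trans h₀le
        _ = c / 2 * R := by field_simp
    linarith [mul_pow_pred_le_mul_pow hR.le hCh (by omega : 1 ≤ n), mul_nonneg hA.le (sq_nonneg h)]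

theorem stmt_4 (n : ℕ) (hn : 3 ≤ n) (S A C c R h₀ : ℝ)
    (hS : 0 < S) (hA : 0 < A) (hC : 0 < C) (hc : 0 < c) (hR : 0 < R) (hh₀ : 0 < h₀)
    (h₀le : h₀ ≤ c * R / (2 * C))
    (hB : (C ^ n * ((n : ℝ) - 1) ^ (n - 1) / ((n : ℝ) ^ n * c ^ (n - 1))) * h₀ ^ (n - 2) ≤ A / 2) :
    ∀ h : ℝ, 0 ≤ h → h ≤ h₀ →
      (∀ t : ℝ, 0 ≤ t → t ≤ R →
        2 * S - A * h ^ 2 + C * h * t ^ (n - 1) - c * t ^ n ≤ 2 * S - (A / 2) * h ^ 2) ∧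
      2 * S - A * h ^ 2 + C * h * R ^ (n - 1) - c * R ^ n ≤ 2 * S - (c / 2) * R ^ n :=
  stmt_4_general n hn S A C c R h₀ hA hC hc hR h₀le hB
end

section
/- Let n ≥ 3, S, κ > 0. There exist δ₀ > 0, R > 0, and positive constants such that defining F(h, t) = 2·cos(√κ·h)^n·S + C·h·t^(n−1) − c·t^n for given C, c > 0, one has: (i) F(δ₀, t) < 2S for all t ∈ [0, R]; (ii) F(h, R) < 2S for all h ∈ [0, δ₀]; (iii) 2·cos(√κ·r)^n·S < 2S for all r ∈ (0, δ₀]. Hence sup over the three parameter ranges of the corresponding quantities is strictly less than 2S. -/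
/-!
Take `R = 1` and `δ₀` small. Removing the disk gains area of order `δ₀²`, since
`cos (√κ δ₀) ^ n ≤ 1 - (2 / π²) κ δ₀²`, while the cylinder term is at most
`max_{t ≥ 0} (C δ₀ t^(n-1) - c t^n) ≤ (C δ₀)^n / c^(n-1) = O(δ₀^n) = o(δ₀²)` because `n ≥ 3`.
-/

open Real Filter Topology Asymptotics

lemma mul_pow_sub_mul_pow_succ_le {a b t : ℝ} (m : ℕ) (ha : 0 ≤ a) (hb : 0 < b) (ht : 0 ≤ t) :
    a * t ^ m - b * t ^ (m + 1) ≤ a ^ (m + 1) / b ^ m := by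
  have hfactor : a * t ^ m - b * t ^ (m + 1) = t ^ m * (a - b * t) := by ring
  rw [hfactor]
  rcases le_total a (b * t) with hbt | hbt
  · exact (mul_nonpos_of_nonneg_of_nonpos (by positivity) (by linarith)).trans (by positivity)
  · have ht_le : t ≤ a / b := by rwa [le_div_iff₀ hb, mul_comm]
    calc t ^ m * (a - b * t) ≤ (a / b) ^ m * a := by
          gcongr
          nlinarith
      _ = a ^ (m + 1) / b ^ m := by rw [div_pow, pow_succ]; ring

lemma eventually_mul_pow_lt_mul_sq {k : ℕ} (hk : 2 < k) (a : ℝ) {b : ℝ} (hb : 0 < b) :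
    ∀ᶠ x in 𝓝[>] (0 : ℝ), a * x ^ k < b * x ^ 2 := by
  have hsmall : (fun x : ℝ ↦ a * x ^ k) =o[𝓝[>] 0] fun x ↦ b * x ^ 2 :=
    (((isLittleO_pow_pow hk).const_mul_left a).const_mul_right' (isUnit_iff_ne_zero.2 hb.ne')
      ).mono nhdsWithin_le_nhds
  have hpos : ∀ᶠ x in 𝓝[>] (0 : ℝ), 0 < ‖b * x ^ 2‖ := by
    filter_upwards [self_mem_nhdsWithin] with x hx
    exact norm_pos_iff.2 (mul_pos hb (pow_pos hx 2)).ne'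
  filter_upwards [hsmall.eventuallyLT_norm_of_eventually_pos hpos, self_mem_nhdsWithin]
    with x hlt hx
  rw [norm_of_nonneg (by positivity : 0 ≤ b * x ^ 2)] at hlt
  exact (le_norm_self _).trans_lt hlt

lemma cos_pow_le_one_sub_mul_sq {x : ℝ} {n : ℕ} (hn : n ≠ 0) (hx : |x| ≤ π / 2) :
    cos x ^ n ≤ 1 - 2 / π ^ 2 * x ^ 2 := by
  obtain ⟨hx_lo, hx_hi⟩ := abs_le.1 hx
  calc cos x ^ n ≤ cos x :=
        pow_le_of_le_one (cos_nonneg_of_neg_pi_div_two_le_of_le hx_lo hx_hi) (cos_le_one x) hn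
    _ ≤ 1 - 2 / π ^ 2 * x ^ 2 := cos_le_one_sub_mul_cos_sq (hx.trans (by linarith [pi_pos]))

theorem stmt_15 (n : ℕ) (hn : 3 ≤ n) (S κ : ℝ) (hS : 0 < S) (hκ : 0 < κ)
    (C c : ℝ) (hC : 0 < C) (hc : 0 < c) :
    ∃ δ₀ > (0 : ℝ), ∃ R > (0 : ℝ),
      (∀ t ∈ Set.Icc (0 : ℝ) R,
        2 * Real.cos (Real.sqrt κ * δ₀) ^ n * S + C * δ₀ * t ^ (n - 1) - c * t ^ n < 2 * S) ∧
      (∀ h ∈ Set.Icc (0 : ℝ) δ₀,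
        2 * Real.cos (Real.sqrt κ * h) ^ n * S + C * h * R ^ (n - 1) - c * R ^ n < 2 * S) ∧
      (∀ r ∈ Set.Ioc (0 : ℝ) δ₀, 2 * Real.cos (Real.sqrt κ * r) ^ n * S < 2 * S) := by
  obtain ⟨m, rfl⟩ : ∃ m, n = m + 1 := ⟨n - 1, by omega⟩
  simp only [Nat.add_sub_cancel]
  have hgain := eventually_mul_pow_lt_mul_sq (by omega : 2 < m + 1) (C ^ (m + 1) / c ^ m)
    (by positivity : 0 < 2 * S * (2 / π ^ 2 * κ))
  have hscale (a : ℝ) : Tendsto (fun δ ↦ a * δ) (𝓝[>] 0) (𝓝 0) :=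
    ((continuous_const_mul a).tendsto' 0 0 (mul_zero a)).mono_left nhdsWithin_le_nhds
  have hsmall : ∀ᶠ δ in 𝓝[>] (0 : ℝ), √κ * δ ≤ π / 2 ∧ C * δ < c :=
    ((hscale √κ).eventually (eventually_le_nhds (by positivity))).and
      ((hscale C).eventually (eventually_lt_nhds hc))
  obtain ⟨δ, hδ_gain, ⟨hδ_pi, hδ_c⟩, hδ⟩ := (hgain.and (hsmall.and self_mem_nhdsWithin)).exists
  have hcos : ∀ y ∈ Set.Icc 0 δ, cos (√κ * y) ^ (m + 1) ≤ 1 - 2 / π ^ 2 * κ * y ^ 2 := by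
    rintro y ⟨hy₀, hyδ⟩
    have hy : |√κ * y| ≤ π / 2 := by
      rw [abs_of_nonneg (by positivity)]
      exact (mul_le_mul_of_nonneg_left hyδ (sqrt_nonneg κ)).trans hδ_pi
    have := cos_pow_le_one_sub_mul_sq m.succ_ne_zero hy
    rwa [mul_pow, sq_sqrt hκ.le, ← mul_assoc] at this
  refine ⟨δ, hδ, 1, one_pos, ?_, ?_, ?_⟩
  · rintro t ⟨ht₀, -⟩
    have hcyl := mul_pow_sub_mul_pow_succ_le m (by positivity : 0 ≤ C * δ) hc ht₀
    have hdisk := hcos δ ⟨hδ.le, le_rfl⟩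
    have : (C * δ) ^ (m + 1) / c ^ m = C ^ (m + 1) / c ^ m * δ ^ (m + 1) := by ring
    nlinarith
  · rintro h ⟨h₀, hδh⟩
    have hdisk : cos (√κ * h) ^ (m + 1) ≤ 1 :=
      (hcos h ⟨h₀, hδh⟩).trans (sub_le_self _ (by positivity))
    have hcyl : C * h < c := (mul_le_mul_of_nonneg_left hδh hC.le).trans_lt hδ_c
    rw [one_pow, one_pow]
    nlinarith
  · rintro r ⟨hr₀, hrδ⟩
    have hdisk := hcos r ⟨hr₀.le, hrδ⟩
    have : 0 < 2 / π ^ 2 * κ * r ^ 2 := by positivity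
    nlinarith
end
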